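/- For every set operator ψ̃, the image operator F(ψ̃) defined by F(ψ̃)(f)(x) = Σ_{t=1}^{m} ψ̃(T_t[f])(x) is a well-defined stack operator (in particular F(ψ̃)(f)(x) ≤ m for all x), and F⁻¹(F(ψ̃)) = ψ̃, i.e., F(ψ̃)(m·X)(x)/m = ψ̃(X)(x) for every binary image X and x ∈ E. Conversely, for every stack operator ψ, F(F⁻¹(ψ)) = ψ, i.e., Σ_{t=1}^{m} F⁻¹(ψ)(T_t[f])(x) = ψ(f)(x) for every grey-scale image f and x ∈ E. Hence F is a bijection between set operators and stack operators. -/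
import Mathlib


namespace StackMM

variable {E : Type*}

/-- A grey-scale image with maximal intensity `m`. -/
def IsGrey (m : ℕ) (f : E → ℕ) : Prop := ∀ x, f x ≤ m

/-- A binary image. -/
def IsBinary (X : E → ℕ) : Prop := ∀ x, X x ≤ 1

/-- The threshold (cross-section) of `f` at level `t`. -/
def thresh (t : ℕ) (f : E → ℕ) : E → ℕ := fun x => if t ≤ f x then 1 else 0

/-- An image operator maps grey-scale images to grey-scale images. -/
def IsImageOp (m : ℕ) (ψ : (E → ℕ) → E → ℕ) : Prop :=
  ∀ f, IsGrey m f → IsGrey m (ψ f)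

/-- A set operator maps binary images to binary images. -/
def IsSetOp (ψ : (E → ℕ) → E → ℕ) : Prop :=
  ∀ X, IsBinary X → IsBinary (ψ X)

/-- A stack operator: an image operator mapping grey-scale binary images to grey-scale
binary images which commutes in average with cross-sectioning. -/
def IsStackOp (m : ℕ) (ψ : (E → ℕ) → E → ℕ) : Prop :=
  IsImageOp m ψ ∧
  (∀ X : E → ℕ, IsBinary X → ∀ x, ψ (fun y => m * X y) x = 0 ∨ ψ (fun y => m * X y) x = m) ∧
  (∀ f : E → ℕ, IsGrey m f → ∀ x,
    m * ψ f x = ∑ t ∈ Finset.Icc 1 m, ψ (fun y => m * thresh t f y) x)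

/-- `F⁻¹` : the characteristic set operator of a stack operator. -/
def charOp (m : ℕ) (ψ : (E → ℕ) → E → ℕ) : (E → ℕ) → E → ℕ :=
  fun X x => ψ (fun y => m * X y) x / m

/-- `F` : the stack operator associated with a set operator. -/
def stackOf (m : ℕ) (ψt : (E → ℕ) → E → ℕ) : (E → ℕ) → E → ℕ :=
  fun f x => ∑ t ∈ Finset.Icc 1 m, ψt (thresh t f) x

/-- Restriction of the image `f` to the binary image `V`. -/
def restrictTo (V f : E → ℕ) : E → ℕ := fun y => if V y = 1 then f y else 0

/-- `X` is supported in `χ(W) = {x : W x = 1}`. -/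
def SuppIn (W X : E → ℕ) : Prop := ∀ x, W x ≠ 1 → X x = 0

/-- Pointwise infimum of a family in the complete lattice of images bounded by `c`
(the infimum of the empty family is the top element, the constant image `c`). -/
noncomputable def famInf (c : ℕ) {I : Type} (F : I → E → ℕ) : E → ℕ :=
  fun x => sInf (insert c (Set.range fun i => F i x))

/-- Pointwise supremum of a family in the complete lattice of images bounded by `c`
(the supremum of the empty family is the bottom element, the constant image `0`). -/
noncomputable def famSup {I : Type} (F : I → E → ℕ) : E → ℕ :=
  fun x => sSup (insert 0 (Set.range fun i => F i x))

/-- Erosion on the complete lattice of images bounded by `c` : commutes with infima. -/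
def ErosionOn (c : ℕ) (ψ : (E → ℕ) → E → ℕ) : Prop :=
  ∀ (I : Type) (F : I → E → ℕ), (∀ i x, F i x ≤ c) →
    ψ (famInf c F) = famInf c fun i => ψ (F i)

/-- Dilation : maps suprema to suprema. -/
def DilationOn (c : ℕ) (ψ : (E → ℕ) → E → ℕ) : Prop :=
  ∀ (I : Type) (F : I → E → ℕ), (∀ i x, F i x ≤ c) →
    ψ (famSup F) = famSup fun i => ψ (F i)

/-- Anti-dilation : maps suprema to infima. -/
def AntiDilationOn (c : ℕ) (ψ : (E → ℕ) → E → ℕ) : Prop :=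
  ∀ (I : Type) (F : I → E → ℕ), (∀ i x, F i x ≤ c) →
    ψ (famSup F) = famInf c fun i => ψ (F i)

/-- Anti-erosion : maps infima to suprema. -/
def AntiErosionOn (c : ℕ) (ψ : (E → ℕ) → E → ℕ) : Prop :=
  ∀ (I : Type) (F : I → E → ℕ), (∀ i x, F i x ≤ c) →
    ψ (famInf c F) = famSup fun i => ψ (F i)

variable [AddCommGroup E]

/-- Translation invariance (on images satisfying `P`) : `ψ (f ∘ τ_h) = ψ f ∘ τ_h`. -/
def TransInvOn (P : (E → ℕ) → Prop) (ψ : (E → ℕ) → E → ℕ) : Prop :=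
  ∀ f : E → ℕ, P f → ∀ h : E, ψ (fun y => f (y + h)) = fun x => ψ f (x + h)

/-- Locally defined within the window `W` : `ψ f x = ψ (f|_{W ∘ τ_{-x}}) x`. -/
def LocalOn (P : (E → ℕ) → Prop) (W : E → ℕ) (ψ : (E → ℕ) → E → ℕ) : Prop :=
  ∀ f : E → ℕ, P f → ∀ x : E, ψ f x = ψ (restrictTo (fun y => W (y - x)) f) x

/-- An image W-operator : translation-invariant and locally defined within `W`. -/
def IsWOp (m : ℕ) (W : E → ℕ) (ψ : (E → ℕ) → E → ℕ) : Prop :=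
  TransInvOn (IsGrey m) ψ ∧ LocalOn (IsGrey m) W ψ

/-- A set W-operator : translation-invariant and locally defined within `W`. -/
def IsSetWOp (W : E → ℕ) (ψ : (E → ℕ) → E → ℕ) : Prop :=
  TransInvOn IsBinary ψ ∧ LocalOn IsBinary W ψ

omit [AddCommGroup E] in
lemma thresh_binary (t : ℕ) (f : E → ℕ) : IsBinary (thresh t f) := by
  intro x; unfold thresh; split <;> omega

omit [AddCommGroup E] in
lemma thresh_mul {m t : ℕ} (ht1 : 1 ≤ t) (ht2 : t ≤ m) {X : E → ℕ} (hX : IsBinary X) :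
    thresh t (fun y => m * X y) = X := by
  funext y
  rcases Nat.le_one_iff_eq_zero_or_eq_one.mp (hX y) with h | h <;>
    simp [thresh, h] <;> omega

/-- Proposition 2: `F` is a bijection between set operators and stack operators, with
inverse `F⁻¹`. -/
theorem stackOf_bijection {E : Type*} [AddCommGroup E] [Countable E]
    (m : ℕ) (hm : 0 < m) :
    (∀ ψt : (E → ℕ) → E → ℕ, IsSetOp ψt →
      IsStackOp m (stackOf m ψt) ∧
        ∀ X : E → ℕ, IsBinary X → ∀ x, charOp m (stackOf m ψt) X x = ψt X x) ∧
    (∀ ψ : (E → ℕ) → E → ℕ, IsStackOp m ψ →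
        ∀ f : E → ℕ, IsGrey m f → ∀ x, stackOf m (charOp m ψ) f x = ψ f x) := by
  constructor
  · intro ψt hψt
    have key : ∀ X : E → ℕ, IsBinary X → ∀ x,
        stackOf m ψt (fun y => m * X y) x = m * ψt X x := by
      intro X hX x
      unfold stackOf
      rw [Finset.sum_congr rfl (fun t ht => by
        rw [thresh_mul (Finset.mem_Icc.mp ht).1 (Finset.mem_Icc.mp ht).2 hX])]
      simp [mul_comm]
    refine ⟨⟨?_, ?_, ?_⟩, ?_⟩
    · intro f hf x
      unfold stackOf
      calc ∑ t ∈ Finset.Icc 1 m, ψt (thresh t f) x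
          ≤ ∑ _t ∈ Finset.Icc 1 m, 1 :=
            Finset.sum_le_sum fun t _ => hψt _ (thresh_binary t f) x
        _ = m := by simp
    · intro X hX x
      rw [key X hX x]
      rcases Nat.le_one_iff_eq_zero_or_eq_one.mp (hψt X hX x) with h | h <;> simp [h]
    · intro f hf x
      rw [Finset.sum_congr rfl fun t _ => key (thresh t f) (thresh_binary t f) x]
      rw [← Finset.mul_sum]
      rfl
    · intro X hX x
      unfold charOp
      rw [key X hX x, Nat.mul_div_cancel_left _ hm]
  · intro ψ hψ f hf x
    obtain ⟨himg, hbin, hstack⟩ := hψ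
    have hdvd : ∀ t, ψ (fun y => m * thresh t f y) x / m * m
        = ψ (fun y => m * thresh t f y) x := by
      intro t
      rcases hbin (thresh t f) (thresh_binary t f) x with h | h <;>
        simp [h, Nat.div_self hm]
    apply Nat.eq_of_mul_eq_mul_left hm
    rw [hstack f hf x]
    unfold stackOf charOp
    rw [Finset.mul_sum]
    exact Finset.sum_congr rfl fun t _ => by rw [mul_comm, hdvd t]

end StackMM
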